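/- arXiv:math/0702226 — 3 statements merged into one kernel-verified Lean document; each statement's English description precedes it below -/
import Mathlib

section
/- Let A be an m×n complex matrix (m ≥ n) with full column rank, with rows a_1*, …, a_m*, and let x ∈ ℂⁿ solve Ax = b. Let (x_k) be the randomized Kaczmarz iteration: x_0 ∈ ℂⁿ is arbitrary, and given x_{k-1}, choose a random index r_k ∈ {1,…,m} (independently of previous choices) with P(r_k = j) = ‖a_j‖₂²/‖A‖_F², and set x_k = x_{k-1} + ((b_{r_k} − ⟨a_{r_k}, x_{k-1}⟩)/‖a_{r_k}‖₂²)·a_{r_k}. Then for every k ≥ 0, E‖x_k − x‖₂² ≤ (1 − κ(A)^{-2})^k · ‖x_0 − x‖₂², where κ(A) = ‖A‖_F / σ_min(A). -/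
/-!
Randomized Kaczmarz (Strohmer–Vershynin), Theorem 2 (main convergence estimate).

We model the matrix `A` by its rows `a 1, …, a m` (so `(Az)_j = ⟨a j, z⟩` and
`‖Az‖₂² = ∑ j ‖⟨a j, z⟩‖²`).  The expectation over the first `k` independent
random row choices (row `j` chosen with probability `‖a j‖²/‖A‖_F²`) is the
finite weighted sum over all index sequences `ω : Fin k → Fin m`.
-/

open scoped BigOperators

/-- One step of the Kaczmarz iteration: orthogonal projection of `y` onto the
hyperplane `{u : ⟨a j, u⟩ = b j}`. -/
noncomputable def kacStep {m n : ℕ} (a : Fin m → EuclideanSpace ℂ (Fin n))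
    (b : Fin m → ℂ) (j : Fin m) (y : EuclideanSpace ℂ (Fin n)) :
    EuclideanSpace ℂ (Fin n) :=
  y + ((b j - (inner ℂ (a j) y : ℂ)) / ((‖a j‖ : ℂ) ^ 2)) • a j

/-- The Kaczmarz iterate obtained from `x0` by applying the steps with the row
indices listed in `l` (in order). -/
noncomputable def kacIter {m n : ℕ} (a : Fin m → EuclideanSpace ℂ (Fin n))
    (b : Fin m → ℂ) (x0 : EuclideanSpace ℂ (Fin n)) (l : List (Fin m)) :
    EuclideanSpace ℂ (Fin n) :=
  l.foldl (fun y j => kacStep a b j y) x0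

/-- The squared Frobenius norm `‖A‖_F² = ∑ j ‖a j‖₂²`. -/
noncomputable def frobSq {m n : ℕ} (a : Fin m → EuclideanSpace ℂ (Fin n)) : ℝ :=
  ∑ j, ‖a j‖ ^ 2

/-- The smallest singular value `σ_min(A) = inf {‖Az‖₂ : ‖z‖₂ = 1}`, where
`‖Az‖₂² = ∑ j ‖⟨a j, z⟩‖²`. -/
noncomputable def sigmaMin {m n : ℕ} (a : Fin m → EuclideanSpace ℂ (Fin n)) : ℝ :=
  sInf {r : ℝ | ∃ z : EuclideanSpace ℂ (Fin n), ‖z‖ = 1 ∧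
    r = Real.sqrt (∑ j, ‖(inner ℂ (a j) z : ℂ)‖ ^ 2)}

/-- The scaled condition number `κ(A) = ‖A‖_F / σ_min(A)`. -/
noncomputable def scaledCond {m n : ℕ} (a : Fin m → EuclideanSpace ℂ (Fin n)) : ℝ :=
  Real.sqrt (frobSq a) / sigmaMin a

/-!
Each Kaczmarz step is the orthogonal projection onto a hyperplane through the solution `x`, so
it shortens the error `e = y - x` by exactly its component along the chosen row:
`‖e'‖² = ‖e‖² - |⟨a_j, e⟩|² / ‖a_j‖²`. Averaging with the weights `‖a_j‖² / ‖A‖_F²` removes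
`‖A e‖² / ‖A‖_F² ≥ σ_min(A)² ‖e‖² / ‖A‖_F² = κ(A)⁻² ‖e‖²`, so each step contracts the expected
squared error by `1 - κ(A)⁻²`; independence of the choices lets this iterate.
-/

theorem Fintype.sum_prod_mul_ofFn_succ {ι R : Type*} [Fintype ι] [CommSemiring R]
    (w : ι → R) (f : List ι → R) (k : ℕ) :
    ∑ ω : Fin (k + 1) → ι, (∏ i, w (ω i)) * f (List.ofFn ω)
      = ∑ j, w j * ∑ ω : Fin k → ι, (∏ i, w (ω i)) * f (j :: List.ofFn ω) := by
  rw [← (Fin.consEquiv fun _ => ι).sum_comp, Fintype.sum_prod_type]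
  simp [Fin.consEquiv, Fin.prod_univ_succ, List.ofFn_succ, Finset.mul_sum, mul_assoc]

theorem sum_prod_mul_foldl_le {ι α : Type*} [Fintype ι] (w : ι → ℝ) (hw : ∀ j, 0 ≤ w j)
    (step : ι → α → α) (V : α → ℝ) {ρ : ℝ} (hρ : 0 ≤ ρ)
    (hstep : ∀ y, ∑ j, w j * V (step j y) ≤ ρ * V y) (k : ℕ) (y : α) :
    ∑ ω : Fin k → ι, (∏ i, w (ω i)) * V ((List.ofFn ω).foldl (fun y j => step j y) y)
      ≤ ρ ^ k * V y := by
  induction k generalizing y with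
  | zero => simp
  | succ k ih =>
    rw [Fintype.sum_prod_mul_ofFn_succ w (fun l => V (l.foldl (fun y j => step j y) y))]
    calc ∑ j, w j * ∑ ω : Fin k → ι, (∏ i, w (ω i)) *
            V ((List.ofFn ω).foldl (fun y j => step j y) (step j y))
        ≤ ∑ j, w j * (ρ ^ k * V (step j y)) :=
          Finset.sum_le_sum fun j _ => mul_le_mul_of_nonneg_left (ih (step j y)) (hw j)
      _ = ρ ^ k * ∑ j, w j * V (step j y) := by
          rw [Finset.mul_sum]; exact Finset.sum_congr rfl fun j _ => by ring
      _ ≤ ρ ^ k * (ρ * V y) := mul_le_mul_of_nonneg_left (hstep y) (pow_nonneg hρ k)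
      _ = ρ ^ (k + 1) * V y := by ring

theorem norm_sub_inner_div_smul_sq {𝕜 E : Type*} [RCLike 𝕜] [NormedAddCommGroup E]
    [InnerProductSpace 𝕜 E] (u v : E) :
    ‖v - (inner 𝕜 u v / (‖u‖ : 𝕜) ^ 2) • u‖ ^ 2 = ‖v‖ ^ 2 - ‖inner 𝕜 u v‖ ^ 2 / ‖u‖ ^ 2 := by
  have hproj : (𝕜 ∙ u).starProjection v = (inner 𝕜 u v / (‖u‖ : 𝕜) ^ 2) • u := by
    simpa using Submodule.starProjection_singleton 𝕜 (v := u) v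
  have hpyth := (𝕜 ∙ u).norm_sq_eq_add_norm_sq_starProjection v
  rw [Submodule.starProjection_orthogonal_val, hproj] at hpyth
  have hnorm : ‖(inner 𝕜 u v / (‖u‖ : 𝕜) ^ 2) • u‖ ^ 2 = ‖inner 𝕜 u v‖ ^ 2 / ‖u‖ ^ 2 := by
    rcases eq_or_ne u 0 with rfl | hu
    · simp
    · have : ‖u‖ ≠ 0 := norm_ne_zero_iff.2 hu
      rw [norm_smul, norm_div, norm_pow, RCLike.norm_ofReal, abs_norm]
      field_simp
  linarith

section Kaczmarz

variable {m n : ℕ} (a : Fin m → EuclideanSpace ℂ (Fin n))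

theorem frobSq_nonneg : 0 ≤ frobSq a := Finset.sum_nonneg fun j _ => by positivity

theorem sigmaMin_nonneg : 0 ≤ sigmaMin a :=
  Real.sInf_nonneg (by rintro r ⟨z, hz, rfl⟩; exact Real.sqrt_nonneg _)

theorem sigmaMin_sq_le_of_norm_eq_one {z : EuclideanSpace ℂ (Fin n)} (hz : ‖z‖ = 1) :
    sigmaMin a ^ 2 ≤ ∑ j, ‖inner ℂ (a j) z‖ ^ 2 := by
  have hle : sigmaMin a ≤ Real.sqrt (∑ j, ‖inner ℂ (a j) z‖ ^ 2) :=
    csInf_le ⟨0, by rintro r ⟨w, hw, rfl⟩; exact Real.sqrt_nonneg _⟩ ⟨z, hz, rfl⟩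
  exact (Real.le_sqrt (sigmaMin_nonneg a) (by positivity)).1 hle

theorem sigmaMin_sq_mul_norm_sq_le (z : EuclideanSpace ℂ (Fin n)) :
    sigmaMin a ^ 2 * ‖z‖ ^ 2 ≤ ∑ j, ‖inner ℂ (a j) z‖ ^ 2 := by
  rcases eq_or_ne z 0 with rfl | hz
  · simp
  have hz' : ‖z‖ ≠ 0 := norm_ne_zero_iff.2 hz
  have hunit : ‖((‖z‖⁻¹ : ℝ) : ℂ) • z‖ = 1 := by
    rw [norm_smul, Complex.norm_real, norm_inv, norm_norm, inv_mul_cancel₀ hz']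
  have := sigmaMin_sq_le_of_norm_eq_one a hunit
  simp only [inner_smul_right, norm_mul, Complex.norm_real, norm_inv, norm_norm, mul_pow,
    ← Finset.mul_sum] at this
  rwa [inv_pow, ← div_eq_inv_mul, le_div_iff₀ (by positivity)] at this

theorem sigmaMin_sq_le_frobSq : sigmaMin a ^ 2 ≤ frobSq a := by
  by_cases hS : {r : ℝ | ∃ z : EuclideanSpace ℂ (Fin n), ‖z‖ = 1 ∧
      r = Real.sqrt (∑ j, ‖(inner ℂ (a j) z : ℂ)‖ ^ 2)}.Nonempty
  · obtain ⟨r, z, hz, -⟩ := hS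
    refine (sigmaMin_sq_le_of_norm_eq_one a hz).trans (Finset.sum_le_sum fun j _ => ?_)
    simpa [hz] using pow_le_pow_left₀ (norm_nonneg _) (norm_inner_le_norm (𝕜 := ℂ) (a j) z) 2
  · rw [sigmaMin, Set.not_nonempty_iff_eq_empty.1 hS, Real.sInf_empty]
    simpa using frobSq_nonneg a

theorem inv_scaledCond_sq : (scaledCond a)⁻¹ ^ 2 = sigmaMin a ^ 2 / frobSq a := by
  rw [scaledCond, inv_div, div_pow, Real.sq_sqrt (frobSq_nonneg a)]

theorem inv_scaledCond_sq_le_one : (scaledCond a)⁻¹ ^ 2 ≤ 1 := by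
  rw [inv_scaledCond_sq]
  exact div_le_one_of_le₀ (sigmaMin_sq_le_frobSq a) (frobSq_nonneg a)

variable {a} {b : Fin m → ℂ} {x : EuclideanSpace ℂ (Fin n)}

theorem kacStep_sub_eq {j : Fin m} (hxj : inner ℂ (a j) x = b j) (y : EuclideanSpace ℂ (Fin n)) :
    kacStep a b j y - x = (y - x) - (inner ℂ (a j) (y - x) / (‖a j‖ : ℂ) ^ 2) • a j := by
  rw [kacStep, inner_sub_right, hxj, ← neg_sub (b j), neg_div, neg_smul]
  abel

theorem norm_kacStep_sub_sq {j : Fin m} (hxj : inner ℂ (a j) x = b j)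
    (y : EuclideanSpace ℂ (Fin n)) :
    ‖kacStep a b j y - x‖ ^ 2 = ‖y - x‖ ^ 2 - ‖inner ℂ (a j) (y - x)‖ ^ 2 / ‖a j‖ ^ 2 := by
  rw [kacStep_sub_eq hxj]
  exact norm_sub_inner_div_smul_sq (𝕜 := ℂ) _ _

theorem sum_mul_norm_kacStep_sub_sq_le (hx : ∀ j, inner ℂ (a j) x = b j)
    (y : EuclideanSpace ℂ (Fin n)) :
    ∑ j, ‖a j‖ ^ 2 / frobSq a * ‖kacStep a b j y - x‖ ^ 2
      ≤ (1 - (scaledCond a)⁻¹ ^ 2) * ‖y - x‖ ^ 2 := by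
  have hterm (j : Fin m) : ‖a j‖ ^ 2 / frobSq a * ‖kacStep a b j y - x‖ ^ 2
      = ‖a j‖ ^ 2 / frobSq a * ‖y - x‖ ^ 2 - ‖inner ℂ (a j) (y - x)‖ ^ 2 / frobSq a := by
    rw [norm_kacStep_sub_sq (hx j)]
    rcases eq_or_ne (a j) 0 with h0 | h0
    · simp [h0]
    · have : ‖a j‖ ≠ 0 := norm_ne_zero_iff.2 h0
      field_simp
  calc ∑ j, ‖a j‖ ^ 2 / frobSq a * ‖kacStep a b j y - x‖ ^ 2
      = frobSq a / frobSq a * ‖y - x‖ ^ 2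
          - (∑ j, ‖inner ℂ (a j) (y - x)‖ ^ 2) / frobSq a := by
        rw [Finset.sum_congr rfl fun j _ => hterm j, Finset.sum_sub_distrib, ← Finset.sum_mul,
          ← Finset.sum_div, ← Finset.sum_div, frobSq]
    _ ≤ 1 * ‖y - x‖ ^ 2 - sigmaMin a ^ 2 * ‖y - x‖ ^ 2 / frobSq a := by
        gcongr
        · -- `frobSq a / frobSq a` is `0` rather than `1` when every row vanishes
          exact div_self_le_one _
        · exact frobSq_nonneg a
        · exact sigmaMin_sq_mul_norm_sq_le a (y - x)
    _ = (1 - (scaledCond a)⁻¹ ^ 2) * ‖y - x‖ ^ 2 := by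
        rw [inv_scaledCond_sq]; ring

end Kaczmarz

theorem randomized_kaczmarz_expected_error_general
    (m n : ℕ)
    (a : Fin m → EuclideanSpace ℂ (Fin n)) (b : Fin m → ℂ)
    (x : EuclideanSpace ℂ (Fin n)) (hx : ∀ j, (inner ℂ (a j) x : ℂ) = b j)
    (x0 : EuclideanSpace ℂ (Fin n)) (k : ℕ) :
    ∑ ω : Fin k → Fin m,
        (∏ i, ‖a (ω i)‖ ^ 2 / frobSq a) * ‖kacIter a b x0 (List.ofFn ω) - x‖ ^ 2
      ≤ (1 - ((scaledCond a)⁻¹) ^ 2) ^ k * ‖x0 - x‖ ^ 2 :=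
  sum_prod_mul_foldl_le (fun j => ‖a j‖ ^ 2 / frobSq a)
    (fun _ => div_nonneg (sq_nonneg _) (frobSq_nonneg a)) (kacStep a b) (fun y => ‖y - x‖ ^ 2)
    (sub_nonneg.2 (inv_scaledCond_sq_le_one a)) (sum_mul_norm_kacStep_sub_sq_le hx) k x0

/-- **Randomized Kaczmarz converges in expectation with exponential rate**:
`E ‖x_k − x‖₂² ≤ (1 − κ(A)⁻²)^k ‖x₀ − x‖₂²`. -/
theorem randomized_kaczmarz_expected_error
    (m n : ℕ) (hmn : n ≤ m)
    (a : Fin m → EuclideanSpace ℂ (Fin n)) (b : Fin m → ℂ)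
    (hrank : ∀ z : EuclideanSpace ℂ (Fin n), (∀ j, (inner ℂ (a j) z : ℂ) = 0) → z = 0)
    (x : EuclideanSpace ℂ (Fin n)) (hx : ∀ j, (inner ℂ (a j) x : ℂ) = b j)
    (x0 : EuclideanSpace ℂ (Fin n)) (k : ℕ) :
    ∑ ω : Fin k → Fin m,
        (∏ i, ‖a (ω i)‖ ^ 2 / frobSq a) * ‖kacIter a b x0 (List.ofFn ω) - x‖ ^ 2
      ≤ (1 - ((scaledCond a)⁻¹) ^ 2) ^ k * ‖x0 - x‖ ^ 2 :=
  randomized_kaczmarz_expected_error_general m n a b x hx x0 k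
end

section
/- Let e ∈ ℝⁿ be a unit vector. For x ∈ ℝⁿ with ‖x‖₂ ≤ 1 and z ∈ ℝⁿ with ‖z‖₂ = 1, write x' = ⟨x, e⟩, x'' = x − x'e, z' = ⟨z, e⟩, z'' = z − z'e, and set x₁ = x − ⟨x, z⟩z and x₁'' = x₁ − ⟨x₁, e⟩e. Then ‖x₁''‖₂² − ‖x''‖₂² ≤ |z'|² − ⟨x'', z''⟩². -/
open scoped RealInnerProductSpace

section UnitVector

variable {E : Type*} [NormedAddCommGroup E] [InnerProductSpace ℝ E] {u : E}

theorem inner_sub_inner_smul_of_norm_eq_one (hu : ‖u‖ = 1) (v w : E) :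
    ⟪v - ⟪v, u⟫ • u, w - ⟪w, u⟫ • u⟫ = ⟪v, w⟫ - ⟪v, u⟫ * ⟪w, u⟫ := by
  have huu : ⟪u, u⟫ = 1 := by rw [real_inner_self_eq_norm_sq, hu, one_pow]
  simp only [inner_sub_left, inner_sub_right, real_inner_smul_left, real_inner_smul_right, huu,
    real_inner_comm u v, real_inner_comm u w]
  ring

theorem norm_sub_inner_smul_sq_of_norm_eq_one (hu : ‖u‖ = 1) (v : E) :
    ‖v - ⟪v, u⟫ • u‖ ^ 2 = ‖v‖ ^ 2 - ⟪v, u⟫ ^ 2 := by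
  rw [← real_inner_self_eq_norm_sq, ← real_inner_self_eq_norm_sq,
    inner_sub_inner_smul_of_norm_eq_one hu, sq]

end UnitVector

/-- **Effect of one random projection on the orthogonal component**:
with `x' = ⟨x,e⟩`, `x'' = x − x'e`, `z' = ⟨z,e⟩`, `z'' = z − z'e`,
`x₁ = x − ⟨x,z⟩z`, and `x₁'' = x₁ − ⟨x₁,e⟩e`, one has
`‖x₁''‖² − ‖x''‖² ≤ |z'|² − ⟨x'', z''⟩²`. -/
theorem projection_orthogonal_component_change
    (n : ℕ) (e x z : EuclideanSpace ℝ (Fin n))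
    (he : ‖e‖ = 1) (hx : ‖x‖ ≤ 1) (hz : ‖z‖ = 1) :
    ‖(x - (inner ℝ x z : ℝ) • z) - (inner ℝ (x - (inner ℝ x z : ℝ) • z) e : ℝ) • e‖ ^ 2
        - ‖x - (inner ℝ x e : ℝ) • e‖ ^ 2
      ≤ |(inner ℝ z e : ℝ)| ^ 2
        - (inner ℝ (x - (inner ℝ x e : ℝ) • e) (z - (inner ℝ z e : ℝ) • e) : ℝ) ^ 2 := by
  have hxe : ⟪x, e⟫ ^ 2 ≤ 1 := by
    rw [sq_le_one_iff_abs_le_one]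
    exact (by simpa [he] using abs_real_inner_le_norm x e : |⟪x, e⟫| ≤ ‖x‖).trans hx
  rw [norm_sub_inner_smul_sq_of_norm_eq_one he, norm_sub_inner_smul_sq_of_norm_eq_one hz,
    norm_sub_inner_smul_sq_of_norm_eq_one he, inner_sub_inner_smul_of_norm_eq_one he, sq_abs,
    inner_sub_left, real_inner_smul_left]
  -- the right side minus the left side is `⟪z, e⟫² (1 - ⟪x, e⟫² + ⟪x, z⟫²)`
  have key : 0 ≤ ⟪z, e⟫ ^ 2 * (1 - ⟪x, e⟫ ^ 2 + ⟪x, z⟫ ^ 2) :=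
    mul_nonneg (sq_nonneg _) (by linarith [sq_nonneg ⟪x, z⟫])
  linear_combination key
end

section
/- Let x_0 ∈ ℝⁿ be a unit vector and let z_1, …, z_k ∈ ℝⁿ be unit vectors. Define recursively x_j = x_{j-1} − ⟨x_{j-1}, z_j⟩·z_j for j = 1, …, k. Then |⟨x_k, x_0⟩ − 1| ≤ 2·Σ_{j=1}^k ⟨z_j, x_0⟩². In particular, ‖x_k‖₂ ≥ ⟨x_k, x_0⟩ ≥ 1 − 2·Σ_{j=1}^k ⟨z_j, x_0⟩². -/
open scoped BigOperators

/-- The sequence of successive orthogonal projections of `x0` onto the hyperplanes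
through the origin with unit normals `zs 0, zs 1, …`:
`x_{j+1} = x_j − ⟨x_j, z_{j+1}⟩ z_{j+1}` (here `zs j` is the normal used at step `j+1`). -/
noncomputable def projSeq {n : ℕ} (x0 : EuclideanSpace ℝ (Fin n))
    (zs : ℕ → EuclideanSpace ℝ (Fin n)) : ℕ → EuclideanSpace ℝ (Fin n)
  | 0 => x0
  | j + 1 => projSeq x0 zs j - (inner ℝ (projSeq x0 zs j) (zs j) : ℝ) • zs j

/-! Writing `x_k` for `projSeq x0 zs k`, `c_j = ⟪x_j, z_j⟫` and `t = ⟪x_k, x0⟫` with `‖x0‖ = 1`,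
Pythagoras gives `‖x_k‖² = 1 - ∑ c_j²`, while expanding the recursion against `x0` gives
`1 - t = ∑ c_j ⟪z_j, x0⟫`. Cauchy–Schwarz on the latter sum yields
`(1 - t)² ≤ (1 - ‖x_k‖²) ∑ ⟪z_j, x0⟫² ≤ (1 - t²) ∑ ⟪z_j, x0⟫²`, and cancelling the factor
`1 - t ≥ 0` against `1 + t ≤ 2` leaves `1 - t ≤ 2 ∑ ⟪z_j, x0⟫²`. -/

open Finset RealInnerProductSpace

theorem one_sub_le_two_mul_of_sq_le {t S : ℝ} (ht : t ≤ 1) (hS : 0 ≤ S)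
    (h : (1 - t) ^ 2 ≤ (1 - t ^ 2) * S) : 1 - t ≤ 2 * S := by
  rcases ht.eq_or_lt with rfl | ht
  · linarith
  · have h_cancel : 1 - t ≤ (1 + t) * S :=
      le_of_mul_le_mul_left (by linarith) (sub_pos.2 ht)
    nlinarith

theorem norm_sub_inner_smul_sq_of_norm_eq_one_s10 {E : Type*} [NormedAddCommGroup E]
    [InnerProductSpace ℝ E] (x : E) {z : E} (hz : ‖z‖ = 1) :
    ‖x - ⟪x, z⟫ • z‖ ^ 2 = ‖x‖ ^ 2 - ⟪x, z⟫ ^ 2 := by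
  rw [norm_sub_sq_real, real_inner_smul_right, norm_smul, Real.norm_eq_abs, hz, mul_one, sq_abs]
  ring

section projSeq

variable {n : ℕ} (x0 : EuclideanSpace ℝ (Fin n)) (zs : ℕ → EuclideanSpace ℝ (Fin n))

theorem norm_projSeq_sq {k : ℕ} (hzs : ∀ j, j < k → ‖zs j‖ = 1) :
    ‖projSeq x0 zs k‖ ^ 2 = ‖x0‖ ^ 2 - ∑ j ∈ range k, ⟪projSeq x0 zs j, zs j⟫ ^ 2 := by
  induction k with
  | zero => simp [projSeq]
  | succ k ih =>
    rw [projSeq, norm_sub_inner_smul_sq_of_norm_eq_one_s10 _ (hzs k k.lt_succ_self),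
      ih fun j hj => hzs j (hj.trans k.lt_succ_self), sum_range_succ]
    ring

theorem norm_projSeq_le {k : ℕ} (hzs : ∀ j, j < k → ‖zs j‖ = 1) :
    ‖projSeq x0 zs k‖ ≤ ‖x0‖ := by
  refine le_of_sq_le_sq ?_ (norm_nonneg x0)
  rw [norm_projSeq_sq x0 zs hzs, sub_le_self_iff]
  exact sum_nonneg fun j _ => sq_nonneg _

theorem inner_projSeq_left (k : ℕ) :
    ⟪projSeq x0 zs k, x0⟫
      = ‖x0‖ ^ 2 - ∑ j ∈ range k, ⟪projSeq x0 zs j, zs j⟫ * ⟪zs j, x0⟫ := by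
  induction k with
  | zero => simp [projSeq]
  | succ k ih =>
    rw [projSeq, inner_sub_left, real_inner_smul_left, ih, sum_range_succ]
    ring

theorem one_sub_inner_projSeq_sq_le {k : ℕ} (hx0 : ‖x0‖ = 1)
    (hzs : ∀ j, j < k → ‖zs j‖ = 1) :
    (1 - ⟪projSeq x0 zs k, x0⟫) ^ 2
      ≤ (1 - ‖projSeq x0 zs k‖ ^ 2) * ∑ j ∈ range k, ⟪zs j, x0⟫ ^ 2 := by
  rw [inner_projSeq_left, norm_projSeq_sq x0 zs hzs, hx0, one_pow, sub_sub_cancel,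
    sub_sub_cancel]
  exact sum_mul_sq_le_sq_mul_sq _ _ _

end projSeq

/-- **Cumulative drift of the exceptional coordinate under `k` projections**:
`|⟨x_k, x0⟩ − 1| ≤ 2 ∑_{j<k} ⟨z_j, x0⟩²`, hence
`‖x_k‖₂ ≥ ⟨x_k, x0⟩ ≥ 1 − 2 ∑_{j<k} ⟨z_j, x0⟩²`. -/
theorem successive_projections_drift
    (n k : ℕ) (x0 : EuclideanSpace ℝ (Fin n)) (hx0 : ‖x0‖ = 1)
    (zs : ℕ → EuclideanSpace ℝ (Fin n)) (hzs : ∀ j, j < k → ‖zs j‖ = 1) :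
    |(inner ℝ (projSeq x0 zs k) x0 : ℝ) - 1|
        ≤ 2 * ∑ j ∈ Finset.range k, (inner ℝ (zs j) x0 : ℝ) ^ 2 ∧
      (inner ℝ (projSeq x0 zs k) x0 : ℝ) ≤ ‖projSeq x0 zs k‖ ∧
      1 - 2 * ∑ j ∈ Finset.range k, (inner ℝ (zs j) x0 : ℝ) ^ 2
        ≤ (inner ℝ (projSeq x0 zs k) x0 : ℝ) := by
  set x := projSeq x0 zs k
  set S := ∑ j ∈ range k, ⟪zs j, x0⟫ ^ 2
  have h_abs : |⟪x, x0⟫| ≤ ‖x‖ := by simpa [hx0] using abs_real_inner_le_norm x x0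
  have h_le_norm : ⟪x, x0⟫ ≤ ‖x‖ := (le_abs_self _).trans h_abs
  have h_norm_le : ‖x‖ ≤ 1 := hx0 ▸ norm_projSeq_le x0 zs hzs
  have hS : 0 ≤ S := sum_nonneg fun j _ => sq_nonneg _
  have h_sq : (1 - ⟪x, x0⟫) ^ 2 ≤ (1 - ⟪x, x0⟫ ^ 2) * S := by
    refine (one_sub_inner_projSeq_sq_le x0 zs hx0 hzs).trans
      (mul_le_mul_of_nonneg_right ?_ hS)
    have := sq_le_sq' (neg_le_of_abs_le h_abs) (le_of_abs_le h_abs)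
    linarith
  have h_drift := one_sub_le_two_mul_of_sq_le (h_le_norm.trans h_norm_le) hS h_sq
  refine ⟨?_, h_le_norm, by linarith⟩
  rwa [abs_sub_comm, abs_of_nonneg (by linarith)]
end
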